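/- In any RRC market, let K be a cutoff profile with K_r^c = K_{r0}^c for every college c and every r ∈ R (all cutoffs of each college are equal). If the induced matching μ(K) is feasible, then μ(K) is envy-free and resource-efficient. -/

import Mathlib

namespace RRC

section Defs

variable (S C R : Type)

/-- A matching market with resource-regional caps (RRC).  Students `S`, colleges `C`,
non-empty resources `R`; the empty resource `r0` is represented by `none : Option R`. -/
structure Market where
  /-- quota of each college -/
  qC : C → ℕ
  qC_pos : ∀ c, 0 < qC c
  /-- quota of each non-empty resource -/
  qR : R → ℕ
  qR_pos : ∀ r, 0 < qR r
  /-- region of each non-empty resource (the region of `r0` is all of `C`) -/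
  region : R → Finset C
  region_nonempty : ∀ r, (region r).Nonempty
  /-- strict priority order of each college over students -/
  prC : C → S → S → Prop
  prC_sto : ∀ c, IsStrictTotalOrder S (prC c)
  /-- strict preference order of each student over `(C × R0) ∪ {∅}`;
  `none` is the outside option `∅` -/
  prS : S → Option (C × Option R) → Option (C × Option R) → Prop
  prS_sto : ∀ s, IsStrictTotalOrder (Option (C × Option R)) (prS s)

/-- A matching: each student appears in at most one contract, so a matching is a
function from students to optional (college, resource) pairs. -/
abbrev Matching := S → Option (C × Option R)

variable {S C R} [DecidableEq S]

/-- Number of contracts of the college `c` in `μ`. -/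
noncomputable def collegeCount (μ : Matching S C R) (c : C) : ℕ :=
  {s : S | ∃ r, μ s = some (c, r)}.ncard

/-- Number of contracts containing the non-empty resource `r` in `μ`. -/
noncomputable def resourceCount (μ : Matching S C R) (r : R) : ℕ :=
  {s : S | ∃ c, μ s = some (c, some r)}.ncard

/-- Feasibility: college quotas, resource quotas, and regions are respected. -/
def Feasible (M : Market S C R) (μ : Matching S C R) : Prop :=
  (∀ c, collegeCount μ c ≤ M.qC c) ∧
  (∀ r, resourceCount μ r ≤ M.qR r) ∧
  (∀ s c r, μ s = some (c, some r) → c ∈ M.region r)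

/-- A pair `(c, r)` is acceptable for `s` if `s` prefers it to being unmatched. -/
def Acceptable (M : Market S C R) (s : S) (c : C) (r : Option R) : Prop :=
  M.prS s (some (c, r)) none

/-- Individual rationality: no unacceptable contract is used. -/
def IndRational (M : Market S C R) (μ : Matching S C R) : Prop :=
  ∀ s x, μ s = some x → M.prS s (some x) none

/-- The contract `(s, c, r) ∉ μ` envy-blocks `μ` through `(s', c, r') ∈ μ`. -/
def EnvyBlocksThrough (M : Market S C R) (μ : Matching S C R)
    (s : S) (c : C) (r : Option R) (s' : S) (r' : Option R) : Prop :=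
  μ s ≠ some (c, r) ∧ μ s' = some (c, r') ∧
  M.prS s (some (c, r)) (μ s) ∧ M.prC c s s' ∧
  Feasible M (Function.update (Function.update μ s' none) s (some (c, r)))

def EnvyBlocks (M : Market S C R) (μ : Matching S C R)
    (s : S) (c : C) (r : Option R) : Prop :=
  ∃ s' r', EnvyBlocksThrough M μ s c r s' r'

def EnvyFree (M : Market S C R) (μ : Matching S C R) : Prop :=
  ∀ s c r, ¬ EnvyBlocks M μ s c r

/-- The contract `(s, c, r) ∉ μ` waste-blocks `μ`. -/
def WasteBlocks (M : Market S C R) (μ : Matching S C R)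
    (s : S) (c : C) (r : Option R) : Prop :=
  μ s ≠ some (c, r) ∧ M.prS s (some (c, r)) (μ s) ∧
  Feasible M (Function.update μ s (some (c, r)))

def NonWasteful (M : Market S C R) (μ : Matching S C R) : Prop :=
  ∀ s c r, ¬ WasteBlocks M μ s c r

/-- Stability: feasible, individually rational, no envy-blocking and no
waste-blocking contract. -/
def Stable (M : Market S C R) (μ : Matching S C R) : Prop :=
  Feasible M μ ∧ IndRational M μ ∧ EnvyFree M μ ∧ NonWasteful M μ

/-- `(s, c, r)` direct-envy-blocks `μ`: it envy-blocks through some `(s', c, r')`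
with `r ∈ {r', r0}`. -/
def DirectEnvyBlocks (M : Market S C R) (μ : Matching S C R)
    (s : S) (c : C) (r : Option R) : Prop :=
  ∃ s' r', EnvyBlocksThrough M μ s c r s' r' ∧ (r = r' ∨ r = none)

/-- The waste-blocking contract `(s, c, r)` is dominated by `(s', c, r') ∉ μ`. -/
def Dominates (M : Market S C R) (μ : Matching S C R)
    (s : S) (c : C) (r : Option R) (s' : S) (r' : Option R) : Prop :=
  μ s' ≠ some (c, r') ∧
  ¬ WasteBlocks M μ s' c r' ∧ ¬ DirectEnvyBlocks M μ s' c r' ∧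
  DirectEnvyBlocks M (Function.update μ s (some (c, r))) s' c r'

/-- Direct-envy stability: feasible, individually rational, no direct-envy-blocking
contract, and every waste-blocking contract is dominated. -/
def DirectEnvyStable (M : Market S C R) (μ : Matching S C R) : Prop :=
  Feasible M μ ∧ IndRational M μ ∧
  (∀ s c r, ¬ DirectEnvyBlocks M μ s c r) ∧
  (∀ s c r, WasteBlocks M μ s c r → ∃ s' r', Dominates M μ s c r s' r')

/-- Weak stability: no direct-envy-blocking contract, and every waste-blocking
contract involves a non-empty resource whose quota is fully used. -/
def WeaklyStable (M : Market S C R) (μ : Matching S C R) : Prop :=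
  Feasible M μ ∧ IndRational M μ ∧
  (∀ s c r, ¬ DirectEnvyBlocks M μ s c r) ∧
  (∀ s c (r : Option R), WasteBlocks M μ s c r →
    ∃ r₁, r = some r₁ ∧ resourceCount μ r₁ = M.qR r₁)

/-- A waste-blocking contract is resource-blocking if the student is already
admitted to the same college. -/
def ResourceBlocks (M : Market S C R) (μ : Matching S C R)
    (s : S) (c : C) (r : Option R) : Prop :=
  WasteBlocks M μ s c r ∧ ∃ r', μ s = some (c, r')

/-- A waste-blocking contract is seat-blocking if the student is not admitted to
the same college. -/
def SeatBlocks (M : Market S C R) (μ : Matching S C R)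
    (s : S) (c : C) (r : Option R) : Prop :=
  WasteBlocks M μ s c r ∧ ¬ ∃ r', μ s = some (c, r')

def ResourceEfficient (M : Market S C R) (μ : Matching S C R) : Prop :=
  ∀ s c r, ¬ ResourceBlocks M μ s c r

def SeatEfficient (M : Market S C R) (μ : Matching S C R) : Prop :=
  ∀ s c r, ¬ SeatBlocks M μ s c r

end Defs

section Cutoffs

variable {S C R : Type} [Fintype S]

/-- A cutoff profile: one cutoff per (college, resource) pair, bounded by the
number of students, with the cutoff for the empty resource the largest. -/
def IsCutoffProfile (St : Type) [Fintype St] {Co Re : Type}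
    (K : Co → Option Re → ℕ) : Prop :=
  (∀ c r, K c r ≤ Fintype.card St) ∧ ∀ c (r : Re), K c (some r) ≤ K c none

/-- Rank of student `s` in the priority order of college `c` (0 = best). -/
noncomputable def studentRank (M : Market S C R) (c : C) (s : S) : ℕ :=
  {s' : S | M.prC c s' s}.ncard

/-- `(s, c, r)` is permitted by the cutoff profile `K` if `s` is among the top
`K c r` students of `c`'s priority order. -/
noncomputable def Permitted (M : Market S C R) (K : C → Option R → ℕ)
    (s : S) (c : C) (r : Option R) : Prop :=
  studentRank M c s < K c r

/-- `μ` is the matching induced by the cutoff profile `K`: every student gets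
their most preferred acceptable permitted contract, if any. -/
def IsInduced (M : Market S C R) (K : C → Option R → ℕ) (μ : Matching S C R) : Prop :=
  ∀ s : S,
    (∀ c r, μ s = some (c, r) →
      Permitted M K s c r ∧ Acceptable M s c r ∧
      ∀ c' r', Permitted M K s c' r' → Acceptable M s c' r' →
        (c', r') ≠ (c, r) → M.prS s (some (c, r)) (some (c', r'))) ∧
    (μ s = none → ∀ c r, ¬ (Permitted M K s c r ∧ Acceptable M s c r))

/-- `K + 1_r^c`: increase the cutoff of `(c, r)` by one (simultaneously increasing
the cutoff of `(c, r0)` if it was equal to that of `(c, r)`). -/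
def bump [DecidableEq C] [DecidableEq R] (K : C → Option R → ℕ)
    (c : C) (r : Option R) : C → Option R → ℕ :=
  fun c' r' =>
    if c' = c ∧ (r' = r ∨ (r' = none ∧ r ≠ none ∧ K c none = K c r)) then K c' r' + 1
    else K c' r'

/-- An optimal cutoff profile: the induced matching is feasible, and increasing any
non-maximal cutoff yields an infeasible induced matching. -/
def OptimalCutoffs [DecidableEq C] [DecidableEq R]
    (M : Market S C R) (K : C → Option R → ℕ) : Prop :=
  IsCutoffProfile S K ∧
  (∀ μ, IsInduced M K μ → Feasible M μ) ∧
  ∀ c r, K c r < Fintype.card S →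
    ∀ μ', IsInduced M (bump K c r) μ' → ¬ Feasible M μ'

end Cutoffs

section SD

variable {S C R : Type} [DecidableEq S]

/-- `x` is the most preferred contract of the (unmatched) student `s` given the
current matching `μ`: the best acceptable contract keeping the matching feasible,
or `none` if there is no such contract. -/
def BestChoice (M : Market S C R) (μ : Matching S C R) (s : S)
    (x : Option (C × Option R)) : Prop :=
  match x with
  | some (c, r) =>
      Acceptable M s c r ∧ Feasible M (Function.update μ s (some (c, r))) ∧
      ∀ c' r', Acceptable M s c' r' → Feasible M (Function.update μ s (some (c', r'))) →
        (c', r') = (c, r) ∨ M.prS s (some (c, r)) (some (c', r'))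
  | none => ∀ c r, ¬ (Acceptable M s c r ∧ Feasible M (Function.update μ s (some (c, r))))

/-- A run of the serial dictatorship mechanism on a list of students:
`SDRun M l μ μ'` holds if starting from `μ` and processing the students of `l`
in order, each one receiving their most preferred feasible acceptable contract,
yields `μ'`. -/
inductive SDRun (M : Market S C R) : List S → Matching S C R → Matching S C R → Prop
  | nil (μ : Matching S C R) : SDRun M [] μ μ
  | cons (s : S) (l : List S) (μ : Matching S C R) (x : Option (C × Option R))
      (μ' : Matching S C R) (hx : BestChoice M μ s x)
      (h : SDRun M l (Function.update μ s x) μ') : SDRun M (s :: l) μ μ'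

/-- Student `s` weakly prefers `x` to `y`. -/
def WeaklyPrefers (M : Market S C R) (s : S) (x y : Option (C × Option R)) : Prop :=
  x = y ∨ M.prS s x y

/-- Pareto efficiency for students. -/
def ParetoEfficient (M : Market S C R) (μ : Matching S C R) : Prop :=
  ¬ ∃ μ' : Matching S C R, Feasible M μ' ∧
    (∀ s, WeaklyPrefers M s (μ' s) (μ s)) ∧ ∃ s, M.prS s (μ' s) (μ s)

end SD

/-- A strict total order induced by an injective rank function (rank 0 = best). -/
lemma isStrictTotalOrder_of_rank {α : Type*} (f : α → ℕ) (hf : Function.Injective f) :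
    IsStrictTotalOrder α (fun x y => f x < f y) where
  trichotomous a b := by
    intro h1 h2
    apply hf
    simp only [not_lt] at h1 h2
    omega
  irrefl a := lt_irrefl (f a)
  trans a b c h1 h2 := lt_trans h1 h2

end RRC

namespace RRC

/-! With uniform cutoffs, whether a contract `(s, c, r)` is permitted depends only on `s` and
`c`. A student who envies someone admitted to `c` has higher priority there, and a student
asking for another resource at their own college is already admitted to `c`; either way the
desired contract is permitted, and since `μ(K)` gives every student their best permitted
contract, the student cannot prefer it. -/

section UniformCutoffs

variable {S C R : Type} {M : Market S C R} {K : C → Option R → ℕ} {μ : Matching S C R}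

theorem studentRank_lt_of_prC [Finite S] {c : C} {s s' : S} (h : M.prC c s s') :
    studentRank M c s < studentRank M c s' := by
  have := M.prC_sto c
  exact Set.ncard_lt_ncard <|
    LE.le.ssubset_of_mem_notMem (fun t (ht : M.prC c t s) => _root_.trans ht h) h
      (irrefl s)

theorem Permitted.of_uniform (huniform : ∀ c (r : R), K c (some r) = K c none)
    {s : S} {c : C} {r r' : Option R} (h : Permitted M K s c r) : Permitted M K s c r' := by
  have hK : ∀ r : Option R, K c r = K c none := by
    rintro (_ | r)
    exacts [rfl, huniform c r]
  rwa [Permitted, hK r', ← hK r]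

theorem IsInduced.not_prS_of_permitted (hμ : IsInduced M K μ) {s : S} {c : C} {r : Option R}
    (hperm : Permitted M K s c r) : ¬ M.prS s (some (c, r)) (μ s) := by
  have := M.prS_sto s
  intro hpr
  rcases hμs : μ s with _ | ⟨c₀, r₀⟩ <;> rw [hμs] at hpr
  · exact (hμ s).2 hμs c r ⟨hperm, hpr⟩
  · obtain ⟨-, hacc₀, hbest⟩ := (hμ s).1 c₀ r₀ hμs
    have hne : (c, r) ≠ (c₀, r₀) := by
      rintro h
      rw [h] at hpr
      exact irrefl _ hpr
    exact asymm hpr (hbest c r hperm (_root_.trans hpr hacc₀) hne)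

theorem IsInduced.envyFree_of_uniform [Finite S] [DecidableEq S] (hμ : IsInduced M K μ)
    (huniform : ∀ c (r : R), K c (some r) = K c none) : EnvyFree M μ := by
  rintro s c r ⟨s', r', -, hμs', hpr, hprC, -⟩
  have hperm : Permitted M K s c r' :=
    (studentRank_lt_of_prC hprC).trans ((hμ s').1 c r' hμs').1
  exact hμ.not_prS_of_permitted (hperm.of_uniform huniform) hpr

theorem IsInduced.resourceEfficient_of_uniform [DecidableEq S] (hμ : IsInduced M K μ)
    (huniform : ∀ c (r : R), K c (some r) = K c none) : ResourceEfficient M μ := by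
  rintro s c r ⟨⟨-, hpr, -⟩, r', hμs⟩
  exact hμ.not_prS_of_permitted (((hμ s).1 c r' hμs).1.of_uniform huniform) hpr

end UniformCutoffs

theorem uniform_cutoffs_envyFree_resourceEfficient_general
    {S C R : Type} [Fintype S] [DecidableEq S]
    (M : Market S C R) (K : C → Option R → ℕ)
    (huniform : ∀ c (r : R), K c (some r) = K c none)
    (μ : Matching S C R) (hμ : IsInduced M K μ) :
    EnvyFree M μ ∧ ResourceEfficient M μ :=
  ⟨hμ.envyFree_of_uniform huniform, hμ.resourceEfficient_of_uniform huniform⟩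

/-- If all cutoffs of each college are equal (uniform cutoffs) and
the induced matching is feasible, then the induced matching is envy-free and
resource-efficient. -/
theorem uniform_cutoffs_envyFree_resourceEfficient
    {S C R : Type} [Fintype S] [DecidableEq S] [Fintype C] [DecidableEq C]
    [Fintype R] [DecidableEq R]
    (M : Market S C R) (K : C → Option R → ℕ)
    (hK : IsCutoffProfile S K)
    (huniform : ∀ c (r : R), K c (some r) = K c none)
    (μ : Matching S C R) (hμ : IsInduced M K μ) (hfeas : Feasible M μ) :
    EnvyFree M μ ∧ ResourceEfficient M μ :=
  uniform_cutoffs_envyFree_resourceEfficient_general M K huniform μ hμ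

end RRC
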